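/- For m ≥ 0, removing any family of at most 2 pairwise vertex-disjoint subcubes, each of dimension at most m, from Q_{m+3} leaves a connected graph of diameter at most m+4. -/

import Mathlib

open SimpleGraph

/-- The `n`-dimensional hypercube: vertices are `Fin n → Bool`,
adjacent iff Hamming distance is `1`. -/
def Q (n : ℕ) : SimpleGraph (Fin n → Bool) where
  Adj u v := hammingDist u v = 1
  symm := ⟨fun u v (h : hammingDist u v = 1) => show hammingDist v u = 1 by rwa [hammingDist_comm]⟩
  loopless := ⟨fun u h => by simp [hammingDist_self] at h⟩

/-- Flip the `i`-th bit of `x`. -/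
def flipBit {n : ℕ} (x : Fin n → Bool) (i : Fin n) : Fin n → Bool :=
  Function.update x i (!x i)

/-- `S` is a subcube of dimension exactly `m` (fixing `n - m` coordinates). -/
def IsSubcube {n : ℕ} (m : ℕ) (S : Set (Fin n → Bool)) : Prop :=
  ∃ A : Finset (Fin n), A.card = n - m ∧ ∃ p : Fin n → Bool,
    S = {x | ∀ i ∈ A, x i = p i}

/-- `S` is a subcube of dimension at most `m` (fixing at least `n - m` coordinates). -/
def IsSubcubeLe {n : ℕ} (m : ℕ) (S : Set (Fin n → Bool)) : Prop :=
  ∃ A : Finset (Fin n), n - m ≤ A.card ∧ ∃ p : Fin n → Bool,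
    S = {x | ∀ i ∈ A, x i = p i}


/-! Two disjoint subcubes are separated by a coordinate `c` at which their patterns differ, so
each half-cube `{z | z c = b}` meets at most one of them, and that one fixes a further
coordinate `j ≠ c`. To join `x` to `y`, set coordinate `j` of both away from the fault's value
and then move the image of `y` across `c` to the side of `x`: the two ends now lie in a
fault-free subcube of dimension `n - 2`, crossed by a geodesic, for `n + 1` steps in all. Of two
candidates for `j`, at least one makes the step at `y` avoid the other fault. -/

open Finset Function

theorem SimpleGraph.connected_and_dist_le_of_edist_le {V : Type*} {G : SimpleGraph V} [Nonempty V]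
    {d : ℕ} (h : ∀ u v, G.edist u v ≤ d) : G.Connected ∧ ∀ u v, G.dist u v ≤ d := by
  have hr : ∀ u v, G.Reachable u v := fun u v =>
    reachable_of_edist_ne_top ((h u v).trans_lt (ENat.natCast_lt_top d)).ne
  refine ⟨⟨hr⟩, fun u v => ?_⟩
  have := (hr u v).coe_dist_eq_edist ▸ h u v
  exact_mod_cast this

section Hamming

variable {ι : Type*} [Fintype ι] [DecidableEq ι] {β : ι → Type*} [∀ i, DecidableEq (β i)]

theorem hammingDist_update_le_one (x : ∀ i, β i) (i : ι) (b : β i) :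
    hammingDist x (update x i b) ≤ 1 := by
  calc hammingDist x (update x i b) ≤ #{i} := card_le_card fun j hj => by
        by_contra hji
        simp_all [update_of_ne]
    _ = 1 := card_singleton i

theorem hammingDist_update_add_one {x y : ∀ i, β i} {i : ι} (h : x i ≠ y i) :
    hammingDist (update x i (y i)) y + 1 = hammingDist x y := by
  have hfilter : ({j | update x i (y i) j ≠ y j} : Finset ι) =
      ({j | x j ≠ y j} : Finset ι).erase i := by
    ext j
    by_cases hj : j = i
    · subst hj; simp
    · simp [hj]
  unfold hammingDist
  rw [hfilter, card_erase_add_one (by simpa using h)]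

theorem hammingDist_le_sub_card {x y : ∀ i, β i} {D : Finset ι}
    (h : ∀ i ∈ D, x i = y i) : hammingDist x y ≤ Fintype.card ι - #D := by
  calc hammingDist x y ≤ #Dᶜ := card_le_card fun i hi => by
        simp only [mem_filter, mem_univ, true_and] at hi
        exact mem_compl.mpr fun hiD => hi (h i hiD)
    _ = Fintype.card ι - #D := card_compl D

end Hamming

namespace Hypercube

variable {n : ℕ}

def cube (A : Finset (Fin n)) (p : Fin n → Bool) : Set (Fin n → Bool) :=
  {x | ∀ i ∈ A, x i = p i}

theorem exists_ne_of_disjoint_cube {A B : Finset (Fin n)} {p q : Fin n → Bool}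
    (h : Disjoint (cube A p) (cube B q)) : ∃ c ∈ A, c ∈ B ∧ q c ≠ p c := by
  classical
  by_contra! hagree
  let z : Fin n → Bool := fun i => if i ∈ A then p i else q i
  refine Set.disjoint_left.mp h (show z ∈ cube A p from fun i hi => by simp [z, hi])
    fun i hi => ?_
  by_cases hiA : i ∈ A
  · simp [z, hiA, hagree i hiA hi]
  · simp [z, hiA]

theorem update_notMem_cube_or {y : Fin n → Bool} {B : Finset (Fin n)} {q : Fin n → Bool}
    (hy : y ∉ cube B q) {j₁ j₂ : Fin n} (hj : j₁ ≠ j₂) (b₁ b₂ : Bool) :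
    update y j₁ b₁ ∉ cube B q ∨ update y j₂ b₂ ∉ cube B q := by
  obtain ⟨i, hiB, hi⟩ : ∃ i ∈ B, y i ≠ q i := by simpa [cube] using hy
  by_cases hij : i = j₁
  · subst hij
    exact .inr fun hmem => hi (by simpa [update_of_ne hj] using hmem i hiB)
  · exact .inl fun hmem => hi (by simpa [update_of_ne hij] using hmem i hiB)

section Induce

variable {s : Set (Fin n → Bool)}

theorem edist_induce_le_one {x y : s} (h : hammingDist x.1 y.1 ≤ 1) :
    ((Q n).induce s).edist x y ≤ 1 := by
  rw [edist_le_one_iff_adj_or_eq]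
  rcases Nat.le_one_iff_eq_zero_or_eq_one.mp h with h | h
  · exact .inr (Subtype.ext (hammingDist_eq_zero.mp h))
  · exact .inl h

theorem edist_induce_le_hammingDist (x y : s)
    (h : ∀ z, (∀ i, z i = x.1 i ∨ z i = y.1 i) → z ∈ s) :
    ((Q n).induce s).edist x y ≤ hammingDist x.1 y.1 := by
  induction hd : hammingDist x.1 y.1 using Nat.strong_induction_on generalizing x with
  | _ d ih =>
  by_cases hxy : x = y
  · simp [hxy]
  obtain ⟨i, hi⟩ : ∃ i, x.1 i ≠ y.1 i := by
    by_contra! h'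
    exact hxy (Subtype.ext (funext h'))
  have hx'y : ∀ j, update x.1 i (y.1 i) j = x.1 j ∨ update x.1 i (y.1 i) j = y.1 j := by
    intro j
    by_cases hj : j = i
    · subst hj; simp
    · simp [update_of_ne hj]
  have hx' : update x.1 i (y.1 i) ∈ s := h _ hx'y
  have hd' := hammingDist_update_add_one hi
  calc ((Q n).induce s).edist x y
      ≤ ((Q n).induce s).edist x ⟨_, hx'⟩ + ((Q n).induce s).edist ⟨_, hx'⟩ y :=
        SimpleGraph.edist_triangle
    _ ≤ 1 + (d - 1 : ℕ) := by
        refine add_le_add (edist_induce_le_one (hammingDist_update_le_one _ _ _)) ?_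
        refine ih _ (by omega) _ (fun z hz => h z fun j => ?_) (by dsimp only; omega)
        rcases hz j with hz | hz
        · exact hz ▸ hx'y j
        · exact .inr hz
    _ = d := by norm_cast; omega

theorem edist_induce_le_of_cube_subset {x y : s} {D : Finset (Fin n)} {p : Fin n → Bool}
    (hx : x.1 ∈ cube D p) (hy : y.1 ∈ cube D p) (hD : cube D p ⊆ s) :
    ((Q n).induce s).edist x y ≤ (n - #D : ℕ) := by
  refine (edist_induce_le_hammingDist x y fun z hz => hD fun i hi => ?_).trans ?_
  · rcases hz i with hz | hz
    · exact hz.trans (hx i hi)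
    · exact hz.trans (hy i hi)
  · have := hammingDist_le_sub_card fun i hi => (hx i hi).trans (hy i hi).symm
    rw [Fintype.card_fin] at this
    exact_mod_cast this

/-- The route `x → x[j ↦ !b] ⇝ y[j ↦ !b][c ↦ x c] → y[j ↦ !b] → y`, whose middle part stays in
the subcube fixing coordinates `c` and `j`. -/
theorem edist_induce_le_of_forall_mem {x y : s} {c j : Fin n} (hjc : j ≠ c) {b : Bool}
    (hs : ∀ z, z c = x.1 c → z j ≠ b → z ∈ s) (hy : update y.1 j (!b) ∈ s) :
    ((Q n).induce s).edist x y ≤ n + 1 := by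
  set x' := update x.1 j (!b)
  set y' := update y.1 j (!b)
  set y'' := update y' c (x.1 c)
  have hx' : x' ∈ s := hs _ (by simp [x', hjc.symm]) (by simp [x'])
  have hy'' : y'' ∈ s := hs _ (by simp [y'']) (by simp [y'', y', hjc])
  have hcube : cube {c, j} x' ⊆ s := fun z hz =>
    hs z ((hz c (by simp)).trans (by simp [x', hjc.symm])) (by simp [hz j (by simp), x'])
  have hy''x' : y'' ∈ cube {c, j} x' := by
    intro i hi
    rcases mem_insert.mp hi with rfl | hi
    · simp [y'', x', hjc.symm]
    · rw [mem_singleton.mp hi]; simp [y'', y', x', hjc]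
  have hcard : #{c, j} = 2 := card_pair hjc.symm
  have hn : 2 ≤ n := hcard ▸ (card_le_univ _).trans_eq (Fintype.card_fin n)
  have h₂ : ((Q n).induce s).edist ⟨x', hx'⟩ ⟨y'', hy''⟩ ≤ (n - 2 : ℕ) :=
    hcard ▸ edist_induce_le_of_cube_subset (fun i _ => rfl) hy''x' hcube
  have h₃ : ((Q n).induce s).edist ⟨y'', hy''⟩ ⟨y', hy⟩ ≤ 1 :=
    edist_induce_le_one (hammingDist_comm y' _ ▸ hammingDist_update_le_one _ _ _)
  have h₄ : ((Q n).induce s).edist ⟨y', hy⟩ y ≤ 1 :=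
    edist_induce_le_one (hammingDist_comm y.1 _ ▸ hammingDist_update_le_one _ _ _)
  calc ((Q n).induce s).edist x y
      ≤ ((Q n).induce s).edist x ⟨x', hx'⟩ + ((Q n).induce s).edist ⟨x', hx'⟩ y :=
        SimpleGraph.edist_triangle
    _ ≤ 1 + ((n - 2 : ℕ) + (1 + 1)) :=
        add_le_add (edist_induce_le_one (hammingDist_update_le_one _ _ _))
          (SimpleGraph.edist_triangle.trans (add_le_add h₂
            (SimpleGraph.edist_triangle.trans (add_le_add h₃ h₄))))
    _ = n + 1 := by norm_cast; omega

theorem induce_connected_and_dist_le_of_forall_ne_mem (hn : 2 ≤ n) {j : Fin n} {b : Bool}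
    (hs : ∀ z, z j ≠ b → z ∈ s) :
    ((Q n).induce s).Connected ∧ ∀ x y, ((Q n).induce s).dist x y ≤ n + 1 := by
  have : Nonempty s := ⟨⟨fun _ => !b, hs _ (by simp)⟩⟩
  have : Nontrivial (Fin n) := Fin.nontrivial_iff_two_le.mpr hn
  obtain ⟨c, hc⟩ := exists_ne j
  exact connected_and_dist_le_of_edist_le fun x y =>
    edist_induce_le_of_forall_mem hc.symm (fun z _ => hs z) (hs _ (by simp))

variable {A B : Finset (Fin n)} {p q : Fin n → Bool}

theorem edist_induce_le_of_two_cubes_of_apply_eq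
    (hs : ∀ z, z ∈ s ↔ z ∉ cube A p ∧ z ∉ cube B q) (hA : 3 ≤ #A)
    {c : Fin n} (hcA : c ∈ A) (hcB : c ∈ B) (hqc : q c ≠ p c) (x y : s) (hxc : x.1 c = p c) :
    ((Q n).induce s).edist x y ≤ n + 1 := by
  have hroute : ∀ j ∈ A.erase c, update y.1 j (!p j) ∉ cube B q →
      ((Q n).induce s).edist x y ≤ n + 1 := by
    intro j hj hjB
    have hjA := mem_of_mem_erase hj
    refine edist_induce_le_of_forall_mem (ne_of_mem_erase hj) (b := p j) (fun z hzc hzj => ?_) ?_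
    · exact (hs z).mpr ⟨fun hz => hzj (hz j hjA),
        fun hz => hqc ((hz c hcB).symm.trans (hzc.trans hxc))⟩
    · exact (hs _).mpr ⟨fun hz => by simpa using hz j hjA, hjB⟩
  have hyB : y.1 ∉ cube B q := ((hs y).mp y.2).2
  obtain ⟨j₁, hj₁, j₂, hj₂, hj₁₂⟩ := one_lt_card.mp (by rw [card_erase_of_mem hcA]; omega)
  rcases update_notMem_cube_or hyB hj₁₂ (!p j₁) (!p j₂) with h | h
  · exact hroute j₁ hj₁ h
  · exact hroute j₂ hj₂ h

theorem edist_induce_le_of_two_cubes (hs : ∀ z, z ∈ s ↔ z ∉ cube A p ∧ z ∉ cube B q)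
    (hA : 3 ≤ #A) (hB : 3 ≤ #B) (hAB : Disjoint (cube A p) (cube B q)) (x y : s) :
    ((Q n).induce s).edist x y ≤ n + 1 := by
  obtain ⟨c, hcA, hcB, hqc⟩ := exists_ne_of_disjoint_cube hAB
  by_cases hxc : x.1 c = p c
  · exact edist_induce_le_of_two_cubes_of_apply_eq hs hA hcA hcB hqc x y hxc
  · refine edist_induce_le_of_two_cubes_of_apply_eq (fun z => (hs z).trans and_comm) hB hcB hcA
      hqc.symm x y ((Bool.eq_not_of_ne hxc).trans (Bool.eq_not_of_ne hqc).symm)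

theorem induce_connected_and_dist_le_of_two_cubes
    (hs : ∀ z, z ∈ s ↔ z ∉ cube A p ∧ z ∉ cube B q)
    (hA : 3 ≤ #A) (hB : 3 ≤ #B) (hAB : Disjoint (cube A p) (cube B q)) :
    ((Q n).induce s).Connected ∧ ∀ x y, ((Q n).induce s).dist x y ≤ n + 1 := by
  obtain ⟨c, hcA, hcB, hqc⟩ := exists_ne_of_disjoint_cube hAB
  obtain ⟨j, hjA, hjc⟩ := exists_mem_ne (by omega : 1 < #A) c
  have : Nonempty s := ⟨⟨update p j (!p j), (hs _).mpr ⟨fun hz => by simpa using hz j hjA,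
    fun hz => hqc ((hz c hcB).symm.trans (update_of_ne hjc.symm _ _))⟩⟩⟩
  exact connected_and_dist_le_of_edist_le (edist_induce_le_of_two_cubes hs hA hB hAB)

end Induce

end Hypercube

open Hypercube

theorem two_subcube_faults_mplus3 (m : ℕ)
    (F : Finset (Set (Fin (m + 3) → Bool))) (hcard : F.card ≤ 2)
    (hsub : ∀ S ∈ F, IsSubcubeLe m S)
    (hdisj : ∀ S ∈ F, ∀ T ∈ F, S ≠ T → Disjoint S T) :
    ((Q (m + 3)).induce (⋃₀ (↑F : Set (Set (Fin (m + 3) → Bool))))ᶜ).Connected ∧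
    ∀ x y, ((Q (m + 3)).induce (⋃₀ (↑F : Set (Set (Fin (m + 3) → Bool))))ᶜ).dist x y ≤
      m + 4 := by
  obtain hF | hF | hF : #F = 0 ∨ #F = 1 ∨ #F = 2 := by omega
  · obtain rfl := card_eq_zero.mp hF
    exact induce_connected_and_dist_le_of_forall_ne_mem (j := 0) (b := true) (by omega) (by simp)
  · obtain ⟨S, rfl⟩ := card_eq_one.mp hF
    obtain ⟨A, hA, p, rfl⟩ := hsub S (mem_singleton_self S)
    obtain ⟨j, hj⟩ := card_pos.mp (by omega : 0 < #A)
    exact induce_connected_and_dist_le_of_forall_ne_mem (b := p j) (by omega)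
      fun z hz => by simpa using ⟨j, hj, hz⟩
  · obtain ⟨S, T, hST, rfl⟩ := card_eq_two.mp hF
    obtain ⟨A, hA, p, rfl⟩ := hsub _ (mem_insert_self _ _)
    obtain ⟨B, hB, q, rfl⟩ := hsub _ (mem_insert_of_mem (mem_singleton_self _))
    exact induce_connected_and_dist_le_of_two_cubes (fun z => by simp [cube]) (by omega) (by omega)
      (hdisj _ (mem_insert_self _ _) _ (mem_insert_of_mem (mem_singleton_self _)) hST)
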